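/- arXiv:2405.10478 — 3 statements merged into one kernel-verified Lean document; each statement's English description precedes it below -/
import Mathlib

section
/- Let D ⊆ ℝ^d be Lebesgue measurable, η > 0, H_η the smoothed Heaviside function, f : ℝ^d → ℝ integrable on D, and φ, v : ℝ^d → ℝ measurable functions such that v·f is integrable on D. Define Ĵ(ψ) = ∫_D (1 − H_η(ψ(x)))·f(x) dx. Then the map t ↦ Ĵ(φ + t·v) is differentiable at t = 0 with derivative −∫_D v(x)·f(x)·H_η'(φ(x)) dx. -/
open MeasureTheory

/-- The smoothed Heaviside function `H_η` with smoothing parameter `η > 0`. -/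
noncomputable def smoothedHeaviside (η t : ℝ) : ℝ :=
  if t < -η then 0
  else if |t| ≤ η then 1/2 + t/(2*η) + (1/(2*Real.pi)) * Real.sin (Real.pi * t / η)
  else 1

/-- The derivative of the smoothed Heaviside function. -/
noncomputable def smoothedHeavisideDeriv (η t : ℝ) : ℝ :=
  if |t| ≤ η then (1 + Real.cos (Real.pi * t / η)) / (2*η) else 0

/-!
`H_η` is differentiable everywhere with derivative `smoothedHeavisideDeriv η`: on each of the
three pieces this is a direct computation, and at `±η` the one-sided derivatives agree because
`1 + cos (±π) = 0`. Monotonicity then gives `0 ≤ H_η ≤ 1`, and `0 ≤ H_η' ≤ 1/η` bounds the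
`t`-derivative of the integrand by `|v f| / η`, so one may differentiate under the integral sign.
-/

open Set Filter

theorem hasDerivAt_of_hasDerivWithinAt_Iic_Ici {E : Type*} [NormedAddCommGroup E]
    [NormedSpace ℝ E] {f : ℝ → E} {f' : E} {a : ℝ} (hl : HasDerivWithinAt f f' (Iic a) a)
    (hr : HasDerivWithinAt f f' (Ici a) a) : HasDerivAt f f' a := by
  simpa [Iic_union_Ici] using hl.union hr

noncomputable def smoothedHeavisideRamp (η t : ℝ) : ℝ :=
  1/2 + t/(2*η) + (1/(2*Real.pi)) * Real.sin (Real.pi * t / η)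

section SmoothedHeaviside

variable {η : ℝ}

theorem hasDerivAt_smoothedHeavisideRamp (t : ℝ) :
    HasDerivAt (smoothedHeavisideRamp η) ((1 + Real.cos (Real.pi * t / η)) / (2*η)) t := by
  have hsin : HasDerivAt (fun u ↦ Real.sin (Real.pi * u / η))
      (Real.cos (Real.pi * t / η) * (Real.pi / η)) t :=
    (Real.hasDerivAt_sin _).comp t <| by
      simpa using ((hasDerivAt_id t).const_mul Real.pi).div_const η
  refine ((((hasDerivAt_id t).div_const (2*η)).const_add (1/2)).add
    (hsin.const_mul (1/(2*Real.pi)))).congr_deriv ?_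
  field_simp

theorem smoothedHeavisideRamp_neg_self (hη : η ≠ 0) : smoothedHeavisideRamp η (-η) = 0 := by
  rw [smoothedHeavisideRamp, show Real.pi * -η / η = -Real.pi by field_simp, Real.sin_neg,
    Real.sin_pi]
  field_simp
  ring

theorem smoothedHeavisideRamp_self (hη : η ≠ 0) : smoothedHeavisideRamp η η = 1 := by
  rw [smoothedHeavisideRamp, mul_div_cancel_right₀ _ hη, Real.sin_pi]
  field_simp
  ring

theorem smoothedHeaviside_of_abs_le {t : ℝ} (ht : |t| ≤ η) :
    smoothedHeaviside η t = smoothedHeavisideRamp η t := by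
  rw [smoothedHeaviside, if_neg (by linarith [neg_abs_le t]), if_pos ht, smoothedHeavisideRamp]

theorem smoothedHeaviside_of_le_neg (hη : 0 < η) {t : ℝ} (ht : t ≤ -η) :
    smoothedHeaviside η t = 0 := by
  rcases ht.lt_or_eq with ht | rfl
  · exact if_pos ht
  · rw [smoothedHeaviside_of_abs_le (by simp [abs_of_pos hη]),
      smoothedHeavisideRamp_neg_self hη.ne']

theorem smoothedHeaviside_of_ge (hη : 0 < η) {t : ℝ} (ht : η ≤ t) : smoothedHeaviside η t = 1 := by
  rcases ht.lt_or_eq with ht | rfl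
  · rw [smoothedHeaviside, if_neg (by linarith),
      if_neg (by rw [abs_of_pos (by linarith)]; linarith)]
  · rw [smoothedHeaviside_of_abs_le (abs_of_pos hη).le, smoothedHeavisideRamp_self hη.ne']

theorem smoothedHeavisideDeriv_of_abs_le {t : ℝ} (ht : |t| ≤ η) :
    smoothedHeavisideDeriv η t = (1 + Real.cos (Real.pi * t / η)) / (2*η) :=
  if_pos ht

theorem smoothedHeavisideDeriv_of_abs_eq {t : ℝ} (ht : |t| = η) :
    smoothedHeavisideDeriv η t = 0 := by
  rcases eq_or_ne η 0 with rfl | hη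
  · simp [smoothedHeavisideDeriv]
  rw [smoothedHeavisideDeriv_of_abs_le ht.le]
  rcases eq_or_eq_neg_of_abs_eq ht with rfl | rfl
  · simp [mul_div_cancel_right₀ _ hη]
  · simp [mul_neg, neg_div, mul_div_cancel_right₀ _ hη]

theorem smoothedHeavisideDeriv_of_lt_abs {t : ℝ} (ht : η < |t|) : smoothedHeavisideDeriv η t = 0 :=
  if_neg ht.not_ge

theorem smoothedHeavisideDeriv_nonneg (t : ℝ) : 0 ≤ smoothedHeavisideDeriv η t := by
  unfold smoothedHeavisideDeriv
  split_ifs with ht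
  · have : 0 ≤ η := (abs_nonneg t).trans ht
    have := Real.neg_one_le_cos (Real.pi * t / η)
    exact div_nonneg (by linarith) (by linarith)
  · rfl

theorem smoothedHeavisideDeriv_le_inv (hη : 0 < η) (t : ℝ) : smoothedHeavisideDeriv η t ≤ η⁻¹ := by
  unfold smoothedHeavisideDeriv
  split_ifs
  · rw [div_le_iff₀ (by positivity), inv_mul_eq_div, le_div_iff₀ hη]
    nlinarith [Real.cos_le_one (Real.pi * t / η)]
  · positivity

theorem hasDerivAt_smoothedHeaviside (hη : 0 < η) (t : ℝ) :
    HasDerivAt (smoothedHeaviside η) (smoothedHeavisideDeriv η t) t := by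
  have eqOn_ramp : EqOn (smoothedHeaviside η) (smoothedHeavisideRamp η) (Icc (-η) η) :=
    fun s hs ↦ smoothedHeaviside_of_abs_le (abs_le.2 hs)
  rcases lt_trichotomy t (-η) with ht | rfl | ht
  · rw [smoothedHeavisideDeriv_of_lt_abs (by rw [abs_of_neg (by linarith)]; linarith)]
    exact (hasDerivAt_const t 0).congr_of_eventuallyEq <|
      eventually_lt_nhds ht |>.mono fun s hs ↦ smoothedHeaviside_of_le_neg hη hs.le
  · have habs : |-η| = η := by rw [abs_neg, abs_of_pos hη]
    apply hasDerivAt_of_hasDerivWithinAt_Iic_Ici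
    · rw [smoothedHeavisideDeriv_of_abs_eq habs]
      exact (hasDerivWithinAt_const _ _ 0).congr (fun s hs ↦ smoothedHeaviside_of_le_neg hη hs)
        (smoothedHeaviside_of_le_neg hη le_rfl)
    · rw [smoothedHeavisideDeriv_of_abs_le habs.le]
      exact (hasDerivAt_smoothedHeavisideRamp _).hasDerivWithinAt.congr_of_eventuallyEq_of_mem
        (mem_of_superset (Icc_mem_nhdsGE (by linarith)) eqOn_ramp) self_mem_Ici
  rcases lt_trichotomy t η with ht' | ht' | ht'
  · rw [smoothedHeavisideDeriv_of_abs_le (abs_le.2 ⟨ht.le, ht'.le⟩)]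
    exact (hasDerivAt_smoothedHeavisideRamp t).congr_of_eventuallyEq <|
      mem_of_superset (Icc_mem_nhds ht ht') eqOn_ramp
  · subst t
    have habs : |η| = η := abs_of_pos hη
    apply hasDerivAt_of_hasDerivWithinAt_Iic_Ici
    · rw [smoothedHeavisideDeriv_of_abs_le habs.le]
      exact (hasDerivAt_smoothedHeavisideRamp _).hasDerivWithinAt.congr_of_eventuallyEq_of_mem
        (mem_of_superset (Icc_mem_nhdsLE (by linarith)) eqOn_ramp) self_mem_Iic
    · rw [smoothedHeavisideDeriv_of_abs_eq habs]
      exact (hasDerivWithinAt_const _ _ 1).congr (fun s hs ↦ smoothedHeaviside_of_ge hη hs)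
        (smoothedHeaviside_of_ge hη le_rfl)
  · rw [smoothedHeavisideDeriv_of_lt_abs (by rw [abs_of_pos (by linarith)]; linarith)]
    exact (hasDerivAt_const t 1).congr_of_eventuallyEq <|
      eventually_gt_nhds ht' |>.mono fun s hs ↦ smoothedHeaviside_of_ge hη hs.le

theorem monotone_smoothedHeaviside (hη : 0 < η) : Monotone (smoothedHeaviside η) :=
  monotone_of_deriv_nonneg (fun t ↦ (hasDerivAt_smoothedHeaviside hη t).differentiableAt)
    fun t ↦ (hasDerivAt_smoothedHeaviside hη t).deriv ▸ smoothedHeavisideDeriv_nonneg t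

theorem smoothedHeaviside_mem_Icc (hη : 0 < η) (t : ℝ) : smoothedHeaviside η t ∈ Icc 0 1 := by
  constructor
  · calc 0 = smoothedHeaviside η (min t (-η)) :=
          (smoothedHeaviside_of_le_neg hη (min_le_right _ _)).symm
      _ ≤ smoothedHeaviside η t := monotone_smoothedHeaviside hη (min_le_left _ _)
  · calc smoothedHeaviside η t ≤ smoothedHeaviside η (max t η) :=
          monotone_smoothedHeaviside hη (le_max_left _ _)
      _ = 1 := smoothedHeaviside_of_ge hη (le_max_right _ _)

end SmoothedHeaviside

theorem hasDerivAt_integral_comp_add_mul_mul {α : Type*} [MeasurableSpace α] {μ : Measure α}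
    {G G' : ℝ → ℝ} {K C : ℝ} (hG : ∀ s, HasDerivAt G (G' s) s) (hG_bdd : ∀ s, ‖G s‖ ≤ K)
    (hG'_bdd : ∀ s, ‖G' s‖ ≤ C) {φ v f : α → ℝ} (hφ : Measurable φ) (hv : Measurable v)
    (hf : Integrable f μ) (hvf : Integrable (fun x ↦ v x * f x) μ) :
    HasDerivAt (fun t ↦ ∫ x, G (φ x + t * v x) * f x ∂μ) (∫ x, v x * f x * G' (φ x) ∂μ) 0 := by
  have hG_meas : Measurable G :=
    (continuous_iff_continuousAt.2 fun s ↦ (hG s).continuousAt).measurable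
  have hG'_meas : Measurable G' := funext (fun s ↦ (hG s).deriv) ▸ measurable_deriv G
  have hline : ∀ t, Measurable fun x ↦ φ x + t * v x := fun t ↦ hφ.add (hv.const_mul t)
  have hline_deriv : ∀ x t, HasDerivAt (fun t ↦ φ x + t * v x) (v x) t :=
    fun x _ ↦ (hasDerivAt_mul_const (v x)).const_add (φ x)
  have key := hasDerivAt_integral_of_dominated_loc_of_deriv_le (μ := μ) (x₀ := 0)
    (F' := fun t x ↦ v x * f x * G' (φ x + t * v x)) (bound := fun x ↦ C * ‖v x * f x‖)
    univ_mem
    (.of_forall fun t ↦ (hG_meas.comp (hline t)).aestronglyMeasurable.mul hf.1)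
    (hf.bdd_mul (hG_meas.comp (hline 0)).aestronglyMeasurable (ae_of_all _ fun _ ↦ hG_bdd _))
    (hvf.1.mul (hG'_meas.comp (hline 0)).aestronglyMeasurable)
    (ae_of_all _ fun x t _ ↦ by
      rw [norm_mul, mul_comm]
      exact mul_le_mul_of_nonneg_right (hG'_bdd _) (norm_nonneg _))
    (hvf.norm.const_mul C)
    (ae_of_all _ fun x t _ ↦
      (((hG _).comp t (hline_deriv x t)).mul_const (f x)).congr_deriv (by ring))
  simpa using key.2

theorem hasDerivAt_relaxed_functional_general {d : ℕ}
    (D : Set (EuclideanSpace ℝ (Fin d)))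
    (η : ℝ) (hη : 0 < η)
    (f φ v : EuclideanSpace ℝ (Fin d) → ℝ)
    (hφ : Measurable φ) (hv : Measurable v)
    (hf : IntegrableOn f D)
    (hvf : IntegrableOn (fun x => v x * f x) D) :
    HasDerivAt (fun t : ℝ => ∫ x in D, (1 - smoothedHeaviside η (φ x + t * v x)) * f x)
      (-∫ x in D, v x * f x * smoothedHeavisideDeriv η (φ x)) 0 := by
  have hG_bdd (s : ℝ) : ‖1 - smoothedHeaviside η s‖ ≤ 1 := by
    obtain ⟨h0, h1⟩ := smoothedHeaviside_mem_Icc hη s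
    rw [Real.norm_eq_abs, abs_le]
    constructor <;> linarith
  have hG'_bdd (s : ℝ) : ‖-smoothedHeavisideDeriv η s‖ ≤ η⁻¹ := by
    rw [norm_neg, Real.norm_of_nonneg (smoothedHeavisideDeriv_nonneg s)]
    exact smoothedHeavisideDeriv_le_inv hη s
  simpa [integral_neg] using hasDerivAt_integral_comp_add_mul_mul
    (fun s ↦ (hasDerivAt_smoothedHeaviside hη s).const_sub 1) hG_bdd hG'_bdd hφ hv hf hvf

/-- For `Ĵ(ψ) = ∫_D (1 − H_η(ψ)) f dx`, the map `t ↦ Ĵ(φ + t v)` is differentiable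
at `t = 0` with derivative `−∫_D v f H_η'(φ) dx`. -/
theorem hasDerivAt_relaxed_functional {d : ℕ}
    (D : Set (EuclideanSpace ℝ (Fin d))) (hD : MeasurableSet D)
    (η : ℝ) (hη : 0 < η)
    (f φ v : EuclideanSpace ℝ (Fin d) → ℝ)
    (hφ : Measurable φ) (hv : Measurable v)
    (hf : IntegrableOn f D)
    (hvf : IntegrableOn (fun x => v x * f x) D) :
    HasDerivAt (fun t : ℝ => ∫ x in D, (1 - smoothedHeaviside η (φ x + t * v x)) * f x)
      (-∫ x in D, v x * f x * smoothedHeavisideDeriv η (φ x)) 0 :=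
  hasDerivAt_relaxed_functional_general D η hη f φ v hφ hv hf hvf
end

section
/- (Shape derivative of volume, interior form.) Let θ : ℝ^d → ℝ^d be a continuously differentiable, compactly supported vector field with Lipschitz constant L, and let Ω ⊆ ℝ^d be Lebesgue measurable with finite measure. Then the function t ↦ Vol((I + tθ)(Ω)), defined for |t|·L < 1, is differentiable at t = 0 with derivative ∫_Ω div θ(x) dx. -/
/-!
For `|t| L < 1` the map `x ↦ x + t θ x` is injective, and its differential `1 + t Dθ(x)` lies
within distance `1` of the identity, so its determinant cannot vanish along `s ↦ 1 + s t Dθ(x)`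
and stays positive. The change of variables formula therefore gives
`Vol((I + tθ)(Ω)) = ∫_Ω det (1 + t Dθ(x)) dx`. As `‖Dθ(x)‖ ≤ L`, the integrand is a `C¹`
function of `(t, Dθ(x))` with `Dθ(x)` confined to a compact ball, so the integral can be
differentiated under the integral sign, and `d/dt det (1 + t A)` at `t = 0` is `tr A`.
-/

open MeasureTheory Metric Set Topology

theorem hasDerivAt_integral_comp_of_contDiff {α P G : Type*} [MeasurableSpace α]
    {μ : Measure α} [IsFiniteMeasure μ] [NormedAddCommGroup P] [NormedSpace ℝ P]
    [NormedAddCommGroup G] [NormedSpace ℝ G] {Φ : ℝ × P → G} (hΦ : ContDiff ℝ 1 Φ)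
    {K : Set P} (hK : IsCompact K) {g : α → P} (hg : AEStronglyMeasurable g μ)
    (hgK : ∀ᵐ x ∂μ, g x ∈ K) (t₀ : ℝ) :
    HasDerivAt (fun t => ∫ x, Φ (t, g x) ∂μ) (∫ x, fderiv ℝ Φ (t₀, g x) (1, 0) ∂μ) t₀ := by
  set Φ' : ℝ × P → G := fun p => fderiv ℝ Φ p (1, 0)
  have hΦ' : Continuous Φ' := (hΦ.continuous_fderiv one_ne_zero).clm_apply continuous_const
  have hS : IsCompact (closedBall t₀ 1 ×ˢ K) := (isCompact_closedBall t₀ 1).prod hK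
  obtain ⟨C, hC⟩ := hS.exists_bound_of_continuousOn hΦ'.continuousOn
  obtain ⟨C₀, hC₀⟩ := hS.exists_bound_of_continuousOn hΦ.continuous.continuousOn
  have hpair : ∀ t : ℝ, AEStronglyMeasurable (fun x => (t, g x)) μ :=
    fun _ => aestronglyMeasurable_const.prodMk hg
  have hpartial : ∀ t p, HasDerivAt (fun s => Φ (s, p)) (Φ' (t, p)) t := fun t p =>
    ((hΦ.differentiable one_ne_zero _).hasFDerivAt).comp_hasDerivAt t
      ((hasDerivAt_id t).prodMk (hasDerivAt_const t p))
  refine (hasDerivAt_integral_of_dominated_loc_of_deriv_le (ball_mem_nhds t₀ one_pos)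
    (.of_forall fun t => hΦ.continuous.comp_aestronglyMeasurable (hpair t))
    (Integrable.of_bound (hΦ.continuous.comp_aestronglyMeasurable (hpair t₀)) C₀ ?_)
    (hΦ'.comp_aestronglyMeasurable (hpair t₀)) ?_ (integrable_const C)
    (.of_forall fun x t _ => hpartial t (g x))).2
  · filter_upwards [hgK] with x hx using hC₀ _ ⟨mem_closedBall_self zero_le_one, hx⟩
  · filter_upwards [hgK] with x hx t ht using hC _ ⟨ball_subset_closedBall ht, hx⟩

namespace ContinuousLinearMap

section NontriviallyNormedField

variable {𝕜 E : Type*} [NontriviallyNormedField 𝕜] [NormedAddCommGroup E] [NormedSpace 𝕜 E]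
  [FiniteDimensional 𝕜 E]

theorem contDiff_det [CompleteSpace 𝕜] {n : WithTop ℕ∞} :
    ContDiff 𝕜 n (fun f : E →L[𝕜] E => f.det) := by
  let b := Module.finBasis 𝕜 E
  have hentry : ∀ i j, ContDiff 𝕜 n fun f : E →L[𝕜] E => LinearMap.toMatrix b b f i j :=
    fun i j => (Matrix.entryLinearMap 𝕜 𝕜 i j ∘ₗ (LinearMap.toMatrix b b).toLinearMap ∘ₗ
      ContinuousLinearMap.coeLM 𝕜).toContinuousLinearMap.contDiff
  simp_rw [det, ← LinearMap.det_toMatrix b, Matrix.det_apply, Units.smul_def, zsmul_eq_mul]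
  exact ContDiff.sum fun σ _ => contDiff_const.mul (contDiff_prod fun i _ => hentry _ _)

theorem hasDerivAt_det_one_add_smul (f : E →L[𝕜] E) :
    HasDerivAt (fun s : 𝕜 => (1 + s • f).det) (LinearMap.trace 𝕜 E f) 0 := by
  let b := Module.finBasis 𝕜 E
  set M := LinearMap.toMatrix b b (f : E →ₗ[𝕜] E)
  set q := (Matrix.det (1 + (Polynomial.X : Polynomial 𝕜) • M.map Polynomial.C)).divX.divX
  have hexpand : (fun s : 𝕜 => (1 + s • f).det)
      = fun s => 1 + M.trace * s + q.eval s * s ^ 2 := by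
    funext s
    rw [← Matrix.det_one_add_smul, det, ← LinearMap.det_toMatrix b]
    simp [LinearMap.toMatrix_one, M]
  have hlin : HasDerivAt (fun s : 𝕜 => 1 + M.trace * s) M.trace 0 := by
    simpa using ((hasDerivAt_id (0 : 𝕜)).const_mul M.trace).const_add 1
  have hquad : HasDerivAt (fun s : 𝕜 => q.eval s * s ^ 2) 0 0 := by
    simpa using (q.hasDerivAt 0).fun_mul (hasDerivAt_pow 2 (0 : 𝕜))
  rw [hexpand, LinearMap.trace_eq_matrix_trace 𝕜 b]
  simpa using hlin.fun_add hquad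

theorem contDiff_det_one_add_smul [CompleteSpace 𝕜] {n : WithTop ℕ∞} :
    ContDiff 𝕜 n (fun p : 𝕜 × (E →L[𝕜] E) => (1 + p.1 • p.2).det) :=
  contDiff_det.comp (contDiff_const.add (contDiff_fst.smul contDiff_snd))

theorem fderiv_det_one_add_smul_zero_apply [CompleteSpace 𝕜] (f : E →L[𝕜] E) :
    fderiv 𝕜 (fun p : 𝕜 × (E →L[𝕜] E) => (1 + p.1 • p.2).det) (0, f) (1, 0)
      = LinearMap.trace 𝕜 E f :=
  (((contDiff_det_one_add_smul.differentiable one_ne_zero _).hasFDerivAt).comp_hasDerivAt 0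
    ((hasDerivAt_id 0).prodMk (hasDerivAt_const 0 f))).unique (hasDerivAt_det_one_add_smul f)

end NontriviallyNormedField

variable {E : Type*} [NormedAddCommGroup E] [NormedSpace ℝ E] [FiniteDimensional ℝ E]

theorem det_one_add_ne_zero {f : E →L[ℝ] E} (hf : ‖f‖ < 1) : (1 + f).det ≠ 0 := by
  have hunit : IsUnit (1 + f) := by
    convert (Units.oneSub (-f) (by rwa [norm_neg])).isUnit
    rw [Units.val_oneSub, sub_neg_eq_add]
  exact (LinearMap.isUnit_det _ (hunit.map toLinearMapRingHom)).ne_zero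

theorem det_one_add_pos {f : E →L[ℝ] E} (hf : ‖f‖ < 1) : 0 < (1 + f).det := by
  have hne : ∀ s ∈ Icc (0 : ℝ) 1, (1 + s • f).det ≠ 0 := fun s hs =>
    det_one_add_ne_zero <| calc
      ‖s • f‖ ≤ ‖f‖ := by
        rw [norm_smul, Real.norm_of_nonneg hs.1]
        exact mul_le_of_le_one_left (norm_nonneg f) hs.2
      _ < 1 := hf
  have hcont : ContinuousOn (fun s : ℝ => (1 + s • f).det) (Icc 0 1) :=
    (continuous_det.comp (continuous_const.add (continuous_id.smul continuous_const))).continuousOn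
  by_contra! hle
  obtain ⟨s, hs, hs0⟩ := intermediate_value_Icc' zero_le_one hcont
    ⟨by simpa using hle, by simp [det]⟩
  exact hne s hs hs0

end ContinuousLinearMap

section PerturbedIdentity

variable {E : Type*} [NormedAddCommGroup E] [NormedSpace ℝ E] {θ : E → E} {L : NNReal} {t : ℝ}

theorem LipschitzWith.injective_add_smul (hθL : LipschitzWith L θ) (ht : |t| * L < 1) :
    Function.Injective fun x => x + t • θ x := by
  have hsmall : ‖t‖₊ * L < 1⁻¹ := by
    rw [inv_one, ← NNReal.coe_lt_coe]
    simpa using ht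
  exact (AntilipschitzWith.id.add_lipschitzWith ((lipschitzWith_smul t).comp hθL) hsmall).injective

theorem LipschitzWith.norm_smul_fderiv_lt_one (hθL : LipschitzWith L θ) (ht : |t| * L < 1)
    (x : E) :
    ‖t • fderiv ℝ θ x‖ < 1 := by
  rw [norm_smul, Real.norm_eq_abs]
  exact (mul_le_mul_of_nonneg_left (norm_fderiv_le_of_lipschitz ℝ hθL) (abs_nonneg t)).trans_lt ht

theorem measureReal_image_add_smul_eq_integral_det [FiniteDimensional ℝ E] [MeasurableSpace E]
    [BorelSpace E] (μ : Measure E) [μ.IsAddHaarMeasure] (hθ : Differentiable ℝ θ)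
    (hθL : LipschitzWith L θ) {Ω : Set E} (hΩ : MeasurableSet Ω) (ht : |t| * L < 1) :
    μ.real ((fun x => x + t • θ x) '' Ω) = ∫ x in Ω, (1 + t • fderiv ℝ θ x).det ∂μ := by
  have hderiv : ∀ x ∈ Ω, HasFDerivWithinAt (fun x => x + t • θ x) (1 + t • fderiv ℝ θ x) Ω x :=
    fun x _ => ((hasFDerivAt_id x).add ((hθ x).hasFDerivAt.const_smul t)).hasFDerivWithinAt
  have hcov := integral_image_eq_integral_abs_det_fderiv_smul μ hΩ hderiv
    (hθL.injective_add_smul ht).injOn fun _ => (1 : ℝ)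
  simp only [setIntegral_const, smul_eq_mul, mul_one] at hcov
  rw [hcov]
  refine setIntegral_congr_fun hΩ fun x _ => abs_of_pos ?_
  exact ContinuousLinearMap.det_one_add_pos (hθL.norm_smul_fderiv_lt_one ht x)

end PerturbedIdentity

theorem hasDerivAt_volume_perturbed_identity_general {d : ℕ}
    (θ : EuclideanSpace ℝ (Fin d) → EuclideanSpace ℝ (Fin d))
    (hθ : ContDiff ℝ 1 θ)
    (L : NNReal) (hθL : LipschitzWith L θ)
    (Ω : Set (EuclideanSpace ℝ (Fin d))) (hΩ : MeasurableSet Ω)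
    (hΩfin : volume Ω < ⊤) :
    HasDerivAt (fun t : ℝ => (volume ((fun x => x + t • θ x) '' Ω)).toReal)
      (∫ x in Ω, LinearMap.trace ℝ (EuclideanSpace ℝ (Fin d))
        ((fderiv ℝ θ x : EuclideanSpace ℝ (Fin d) →L[ℝ] EuclideanSpace ℝ (Fin d))
          : EuclideanSpace ℝ (Fin d) →ₗ[ℝ] EuclideanSpace ℝ (Fin d))) 0 := by
  have : IsFiniteMeasure (volume.restrict Ω) := isFiniteMeasure_restrict.2 hΩfin.ne
  have hbound : ∀ x, fderiv ℝ θ x ∈ closedBall 0 (L : ℝ) :=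
    fun x => mem_closedBall_zero_iff.2 (norm_fderiv_le_of_lipschitz ℝ hθL)
  have hderiv := hasDerivAt_integral_comp_of_contDiff (μ := volume.restrict Ω)
    ContinuousLinearMap.contDiff_det_one_add_smul
    (isCompact_closedBall 0 (L : ℝ)) (hθ.continuous_fderiv one_ne_zero).aestronglyMeasurable
    (ae_of_all _ hbound) 0
  simp only [ContinuousLinearMap.fderiv_det_one_add_smul_zero_apply] at hderiv
  have hsmall : ∀ᶠ t : ℝ in 𝓝 0, |t| * L < 1 := by
    refine (continuous_abs.mul continuous_const).continuousAt.eventually_lt continuousAt_const ?_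
    simp
  refine hderiv.congr_of_eventuallyEq (hsmall.mono fun t ht => ?_)
  exact measureReal_image_add_smul_eq_integral_det volume (hθ.differentiable one_ne_zero) hθL hΩ ht

/-- Shape derivative of volume (interior form): for a `C¹`, compactly supported,
Lipschitz vector field `θ` and a measurable set `Ω` of finite measure, the map
`t ↦ Vol((I + tθ)(Ω))` is differentiable at `t = 0` with derivative `∫_Ω div θ dx`. -/
theorem hasDerivAt_volume_perturbed_identity {d : ℕ}
    (θ : EuclideanSpace ℝ (Fin d) → EuclideanSpace ℝ (Fin d))
    (hθ : ContDiff ℝ 1 θ) (hθc : HasCompactSupport θ)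
    (L : NNReal) (hθL : LipschitzWith L θ)
    (Ω : Set (EuclideanSpace ℝ (Fin d))) (hΩ : MeasurableSet Ω)
    (hΩfin : volume Ω < ⊤) :
    HasDerivAt (fun t : ℝ => (volume ((fun x => x + t • θ x) '' Ω)).toReal)
      (∫ x in Ω, LinearMap.trace ℝ (EuclideanSpace ℝ (Fin d))
        ((fderiv ℝ θ x : EuclideanSpace ℝ (Fin d) →L[ℝ] EuclideanSpace ℝ (Fin d))
          : EuclideanSpace ℝ (Fin d) →ₗ[ℝ] EuclideanSpace ℝ (Fin d))) 0 :=
  hasDerivAt_volume_perturbed_identity_general θ hθ L hθL Ω hΩ hΩfin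
end

section
/- (Shape derivative of a volume integral, interior form.) Let θ : ℝ^d → ℝ^d be a continuously differentiable, compactly supported vector field with Lipschitz constant L, let f : ℝ^d → ℝ be continuously differentiable with f and ∇f bounded, and let Ω ⊆ ℝ^d be Lebesgue measurable with finite measure. Then the function t ↦ ∫_{(I + tθ)(Ω)} f(x) dx, defined for |t|·L < 1, is differentiable at t = 0 with derivative ∫_Ω div(f·θ)(x) dx = ∫_Ω (∇f(x)·θ(x) + f(x)·div θ(x)) dx. -/
/-!
For small `|t|` the map `I + tθ` is a Lipschitz-small perturbation of the identity, hence
injective, and the change of variables formula turns `∫_{(I + tθ)(Ω)} f` into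
`∫_Ω |det (1 + t Dθ)| f ∘ (I + tθ)`. At `t = 0` this integrand has `t`-derivative
`∇f · θ + f tr Dθ` (the derivative of `det (1 + tB)` at `0` is `tr B`), and it is Lipschitz in
`t ∈ [-1, 1]` uniformly in `x`: `(t, B) ↦ det (1 + tB)` is smooth, hence Lipschitz on the compact
set `[-1, 1] × {‖B‖ ≤ L}`, and `f`, `∇f`, `θ` are bounded. Dominated differentiation on the
finite-measure set `Ω` concludes.
-/

open MeasureTheory Metric Filter
open scoped RealInnerProductSpace NNReal Topology

section Determinant

variable {E : Type*} [NormedAddCommGroup E] [NormedSpace ℝ E]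

@[simp]
theorem ContinuousLinearMap.det_one : (1 : E →L[ℝ] E).det = 1 :=
  LinearMap.det_id

variable [FiniteDimensional ℝ E]

theorem ContinuousLinearMap.contDiff_det_s9 {n : WithTop ℕ∞} :
    ContDiff ℝ n fun B : E →L[ℝ] E => B.det := by
  let b := Module.finBasis ℝ E
  let entry (i j : Fin (Module.finrank ℝ E)) : (E →L[ℝ] E) →L[ℝ] ℝ :=
    LinearMap.toContinuousLinearMap (b.coord i) ∘L ContinuousLinearMap.apply ℝ E (b j)
  have hLeibniz : ∀ B : E →L[ℝ] E, B.det =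
      ∑ σ : Equiv.Perm (Fin (Module.finrank ℝ E)), (σ.sign : ℝ) * ∏ i, entry (σ i) i B := by
    intro B
    rw [ContinuousLinearMap.det, ← LinearMap.det_toMatrix b, Matrix.det_apply]
    simp [entry, LinearMap.toMatrix_apply, Units.smul_def]
  simp_rw [hLeibniz]
  fun_prop

theorem ContinuousLinearMap.hasDerivAt_det_one_add_smul_s9 (B : E →L[ℝ] E) :
    HasDerivAt (fun t : ℝ => (1 + t • B).det) (LinearMap.trace ℝ E B) 0 := by
  let b := Module.finBasis ℝ E
  let M := LinearMap.toMatrix b b B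
  let q := (1 + (Polynomial.X : Polynomial ℝ) • M.map Polynomial.C).det.divX.divX
  have hexpand : ∀ t : ℝ, (1 + t • B).det = 1 + M.trace * t + q.eval t * t ^ 2 := by
    intro t
    rw [ContinuousLinearMap.det, ContinuousLinearMap.toLinearMap_add,
      ContinuousLinearMap.toLinearMap_smul, ContinuousLinearMap.toLinearMap_one,
      ← LinearMap.det_toMatrix b, map_add, map_smul, LinearMap.toMatrix_one]
    exact Matrix.det_one_add_smul t M
  have hpoly : HasDerivAt (fun t : ℝ => 1 + M.trace * t + q.eval t * t ^ 2) M.trace 0 :=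
    ((((hasDerivAt_id (0 : ℝ)).const_mul M.trace).const_add 1).add
      ((q.hasDerivAt 0).mul (hasDerivAt_pow 2 (0 : ℝ)))).congr_deriv (by simp)
  rw [LinearMap.trace_eq_matrix_trace ℝ b]
  simpa only [hexpand] using hpoly

theorem exists_lipschitzOnWith_det_one_add_smul (R : ℝ) :
    ∃ K, ∀ B : E →L[ℝ] E, ‖B‖ ≤ R →
      LipschitzOnWith K (fun t : ℝ => (1 + t • B).det) (closedBall 0 1) := by
  have hdet : ContDiff ℝ 1 fun p : ℝ × (E →L[ℝ] E) => (1 + p.1 • p.2).det :=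
    ContinuousLinearMap.contDiff_det_s9.comp (contDiff_const.add (contDiff_fst.smul contDiff_snd))
  obtain ⟨K, hK⟩ := hdet.contDiffOn.exists_lipschitzOnWith one_ne_zero
    ((convex_closedBall 0 1).prod (convex_closedBall 0 R))
    ((isCompact_closedBall 0 1).prod (isCompact_closedBall 0 R))
  refine ⟨K, fun B hB => ?_⟩
  have := hK.comp (LipschitzWith.prodMk_right B).lipschitzOnWith
    (fun t ht => ⟨ht, mem_closedBall_zero_iff.2 hB⟩)
  rwa [mul_one] at this

end Determinant

theorem LipschitzOnWith.mul_of_norm_le {α R : Type*} [PseudoMetricSpace α] [SeminormedRing R]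
    {g h : α → R} {s : Set α} {Kg Kh Cg Ch : ℝ≥0}
    (hg : LipschitzOnWith Kg g s) (hh : LipschitzOnWith Kh h s)
    (hgC : ∀ a ∈ s, ‖g a‖ ≤ Cg) (hhC : ∀ a ∈ s, ‖h a‖ ≤ Ch) :
    LipschitzOnWith (Cg * Kh + Kg * Ch) (fun a => g a * h a) s := by
  refine LipschitzOnWith.of_dist_le_mul fun a ha b hb => ?_
  have hsplit : g a * h a - g b * h b = g a * (h a - h b) + (g a - g b) * h b := by noncomm_ring
  rw [dist_eq_norm, hsplit]
  calc ‖g a * (h a - h b) + (g a - g b) * h b‖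
      ≤ ‖g a‖ * ‖h a - h b‖ + ‖g a - g b‖ * ‖h b‖ :=
        (norm_add_le _ _).trans (add_le_add (norm_mul_le _ _) (norm_mul_le _ _))
    _ ≤ Cg * (Kh * dist a b) + Kg * dist a b * Ch := by
        rw [← dist_eq_norm, ← dist_eq_norm]
        gcongr
        exacts [hgC a ha, hh.dist_le_mul a ha b hb, hg.dist_le_mul a ha b hb, hhC b hb]
    _ = (Cg * Kh + Kg * Ch : ℝ≥0) * dist a b := by push_cast; ring

section PerturbedIdentity

variable {E : Type*} [NormedAddCommGroup E] [NormedSpace ℝ E]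

theorem eventually_injective_add_smul {θ : E → E} {L : ℝ≥0} (hθ : LipschitzWith L θ) :
    ∀ᶠ t in 𝓝 (0 : ℝ), Function.Injective fun x => x + t • θ x := by
  have hsmall : ∀ᶠ t in 𝓝 (0 : ℝ), |t| * (L : ℝ) < 1 :=
    ((continuous_abs.mul continuous_const).continuousAt (x := (0 : ℝ))).eventually_lt
      continuousAt_const (by simp)
  filter_upwards [hsmall] with t ht
  have htθ : LipschitzWith (‖t‖₊ * L) (t • θ) := (lipschitzWith_smul t).comp hθ
  refine (AntilipschitzWith.id.add_lipschitzWith htθ ?_).injective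
  rw [inv_one, ← NNReal.coe_lt_coe]
  simpa using ht

theorem lipschitzWith_add_smul (x v : E) : LipschitzWith ‖v‖₊ fun t : ℝ => x + t • v :=
  LipschitzWith.of_dist_le_mul fun t s => by
    rw [dist_add_left, dist_eq_norm, ← sub_smul, norm_smul, mul_comm, Real.dist_eq,
      ← Real.norm_eq_abs, coe_nnnorm]

noncomputable def pullbackIntegrand (θ : E → E) (f : E → ℝ) (t : ℝ) (x : E) : ℝ :=
  |(1 + t • fderiv ℝ θ x).det| * f (x + t • θ x)

theorem pullbackIntegrand_zero (θ : E → E) (f : E → ℝ) : pullbackIntegrand θ f 0 = f := by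
  ext x
  simp [pullbackIntegrand]

theorem continuous_pullbackIntegrand {θ : E → E} (hθ : ContDiff ℝ 1 θ) {f : E → ℝ}
    (hf : Continuous f) (t : ℝ) : Continuous (pullbackIntegrand θ f t) :=
  ((ContinuousLinearMap.continuous_det.comp
    (continuous_const.add ((hθ.continuous_fderiv one_ne_zero).const_smul t))).abs).mul
    (hf.comp (continuous_id.add (hθ.continuous.const_smul t)))

variable [FiniteDimensional ℝ E]

theorem exists_lipschitzOnWith_pullbackIntegrand {θ : E → E} {f : E → ℝ} {L Kf : ℝ≥0}
    {Cθ Mf : ℝ} (hθ : LipschitzWith L θ) (hθb : ∀ x, ‖θ x‖ ≤ Cθ) (hf : LipschitzWith Kf f)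
    (hfb : ∀ x, |f x| ≤ Mf) :
    ∃ K, ∀ x, LipschitzOnWith K (pullbackIntegrand θ f · x) (closedBall 0 1) := by
  obtain ⟨Kd, hKd⟩ := exists_lipschitzOnWith_det_one_add_smul (E := E) L
  refine ⟨(1 + Kd) * (Kf * Cθ.toNNReal) + Kd * Mf.toNNReal, fun x => ?_⟩
  have hdet : LipschitzOnWith Kd (fun t : ℝ => |(1 + t • fderiv ℝ θ x).det|) (closedBall 0 1) := by
    have := lipschitzWith_one_norm.comp_lipschitzOnWith
      (hKd (fderiv ℝ θ x) (norm_fderiv_le_of_lipschitz ℝ hθ))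
    rwa [one_mul] at this
  have hdet_le : ∀ t ∈ closedBall (0 : ℝ) 1, ‖|(1 + t • fderiv ℝ θ x).det|‖ ≤ (1 + Kd : ℝ≥0) := by
    intro t ht
    have hdist := hdet.dist_le_mul t ht 0 (mem_closedBall_self zero_le_one)
    rw [zero_smul, add_zero, ContinuousLinearMap.det_one, abs_one, Real.dist_eq, Real.dist_eq,
      sub_zero] at hdist
    rw [mem_closedBall_zero_iff, Real.norm_eq_abs] at ht
    rw [Real.norm_eq_abs, abs_abs, NNReal.coe_add, NNReal.coe_one]
    have := (le_abs_self _).trans hdist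
    nlinarith [Kd.coe_nonneg]
  have hcomp : LipschitzWith (Kf * Cθ.toNNReal) fun t : ℝ => f (x + t • θ x) :=
    (hf.comp (lipschitzWith_add_smul x (θ x))).weaken <| by
      gcongr
      rw [← NNReal.coe_le_coe, coe_nnnorm]
      exact (hθb x).trans (Real.le_coe_toNNReal Cθ)
  exact hdet.mul_of_norm_le hcomp.lipschitzOnWith hdet_le
    (fun t _ => (hfb _).trans (Real.le_coe_toNNReal Mf))

variable [MeasurableSpace E] [BorelSpace E] (μ : Measure E) [μ.IsAddHaarMeasure]

theorem setIntegral_image_add_smul {θ : E → E} (hθ : Differentiable ℝ θ) {t : ℝ}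
    (hinj : Function.Injective fun x => x + t • θ x) {s : Set E} (hs : MeasurableSet s)
    (f : E → ℝ) :
    ∫ x in (fun x => x + t • θ x) '' s, f x ∂μ = ∫ x in s, pullbackIntegrand θ f t x ∂μ :=
  integral_image_eq_integral_abs_det_fderiv_smul μ hs
    (fun x _ => ((hasFDerivAt_id x).add ((hθ x).hasFDerivAt.const_smul t)).hasFDerivWithinAt)
    hinj.injOn f

end PerturbedIdentity

section Gradient

variable {E : Type*} [NormedAddCommGroup E] [InnerProductSpace ℝ E]

theorem lipschitzWith_of_norm_gradient_le [CompleteSpace E] {f : E → ℝ}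
    (hf : Differentiable ℝ f) {C : ℝ} (hC : ∀ x, ‖gradient f x‖ ≤ C) :
    LipschitzWith C.toNNReal f := by
  refine lipschitzWith_of_nnnorm_fderiv_le hf fun x => ?_
  rw [← NNReal.coe_le_coe, coe_nnnorm, ← toDual_gradient, LinearIsometryEquiv.norm_map]
  exact (hC x).trans (Real.le_coe_toNNReal C)

variable [FiniteDimensional ℝ E]

theorem continuous_inner_gradient_add_mul_trace {θ : E → E} (hθ : ContDiff ℝ 1 θ) {f : E → ℝ}
    (hf : ContDiff ℝ 1 f) :
    Continuous fun x => ⟪gradient f x, θ x⟫ + f x * LinearMap.trace ℝ E (fderiv ℝ θ x) := by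
  have hgrad : Continuous (gradient f) :=
    (InnerProductSpace.toDual ℝ E).symm.continuous.comp (hf.continuous_fderiv one_ne_zero)
  have htrace : Continuous fun B : E →L[ℝ] E => LinearMap.trace ℝ E B :=
    (LinearMap.trace ℝ E ∘ₗ ContinuousLinearMap.coeLM ℝ).continuous_of_finiteDimensional
  exact (hgrad.inner hθ.continuous).add
    (hf.continuous.mul (htrace.comp (hθ.continuous_fderiv one_ne_zero)))

theorem hasDerivAt_pullbackIntegrand (θ : E → E) {f : E → ℝ} {x : E}
    (hf : DifferentiableAt ℝ f x) :
    HasDerivAt (pullbackIntegrand θ f · x)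
      (⟪gradient f x, θ x⟫ + f x * LinearMap.trace ℝ E (fderiv ℝ θ x)) 0 := by
  have hdet : HasDerivAt (fun t : ℝ => |(1 + t • fderiv ℝ θ x).det|)
      (LinearMap.trace ℝ E (fderiv ℝ θ x)) 0 := by
    have := (hasDerivAt_abs_pos (by simp : (0 : ℝ) < (1 + (0 : ℝ) • fderiv ℝ θ x).det)).comp 0
      (ContinuousLinearMap.hasDerivAt_det_one_add_smul_s9 (fderiv ℝ θ x))
    rwa [one_mul] at this
  have hpath : HasDerivAt (fun t : ℝ => x + t • θ x) (θ x) 0 := by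
    simpa using ((hasDerivAt_id (0 : ℝ)).smul_const (θ x)).const_add x
  have hcomp : HasDerivAt (fun t : ℝ => f (x + t • θ x)) ⟪gradient f x, θ x⟫ 0 := by
    have hfx : HasFDerivAt f (fderiv ℝ f x) (x + (0 : ℝ) • θ x) := by simpa using hf.hasFDerivAt
    rw [inner_gradient_left]
    exact hfx.comp_hasDerivAt 0 hpath
  refine (hdet.mul hcomp).congr_deriv ?_
  simp only [zero_smul, add_zero, ContinuousLinearMap.det_one, abs_one]
  ring

end Gradient

/-- Shape derivative of a volume integral (interior form): for a `C¹`, compactly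
supported, Lipschitz vector field `θ`, a `C¹` function `f` with `f` and `∇f` bounded,
and a measurable set `Ω` of finite measure, the map `t ↦ ∫_{(I + tθ)(Ω)} f dx` is
differentiable at `t = 0` with derivative
`∫_Ω div(f θ) dx = ∫_Ω (∇f · θ + f div θ) dx`. -/
theorem hasDerivAt_integral_perturbed_identity {d : ℕ}
    (θ : EuclideanSpace ℝ (Fin d) → EuclideanSpace ℝ (Fin d))
    (hθ : ContDiff ℝ 1 θ) (hθc : HasCompactSupport θ)
    (L : NNReal) (hθL : LipschitzWith L θ)
    (f : EuclideanSpace ℝ (Fin d) → ℝ) (hf : ContDiff ℝ 1 f)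
    (Mf : ℝ) (hfb : ∀ x, |f x| ≤ Mf)
    (Mg : ℝ) (hgb : ∀ x, ‖gradient f x‖ ≤ Mg)
    (Ω : Set (EuclideanSpace ℝ (Fin d))) (hΩ : MeasurableSet Ω)
    (hΩfin : volume Ω < ⊤) :
    HasDerivAt (fun t : ℝ => ∫ x in (fun x => x + t • θ x) '' Ω, f x)
      (∫ x in Ω, (⟪gradient f x, θ x⟫ +
        f x * LinearMap.trace ℝ (EuclideanSpace ℝ (Fin d))
          ((fderiv ℝ θ x : EuclideanSpace ℝ (Fin d) →L[ℝ] EuclideanSpace ℝ (Fin d))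
            : EuclideanSpace ℝ (Fin d) →ₗ[ℝ] EuclideanSpace ℝ (Fin d)))) 0 := by
  have hθd := hθ.differentiable one_ne_zero
  have hfd := hf.differentiable one_ne_zero
  have : IsFiniteMeasure (volume.restrict Ω) := isFiniteMeasure_restrict.2 hΩfin.ne
  obtain ⟨Cθ, hCθ⟩ := hθc.exists_bound_of_continuous hθ.continuous
  obtain ⟨K, hK⟩ := exists_lipschitzOnWith_pullbackIntegrand hθL hCθ
    (lipschitzWith_of_norm_gradient_le hfd hgb) hfb
  have hint : Integrable (pullbackIntegrand θ f 0) (volume.restrict Ω) := by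
    rw [pullbackIntegrand_zero]
    exact .of_bound hf.continuous.aestronglyMeasurable Mf (ae_of_all _ hfb)
  have hderiv := (hasDerivAt_integral_of_dominated_loc_of_lip (μ := volume.restrict Ω)
    (bound := fun _ => (K : ℝ)) (closedBall_mem_nhds 0 one_pos)
    (.of_forall fun t => (continuous_pullbackIntegrand hθ hf.continuous t).aestronglyMeasurable)
    hint (continuous_inner_gradient_add_mul_trace hθ hf).aestronglyMeasurable
    (ae_of_all _ fun x => by simpa using hK x) (integrable_const _)
    (ae_of_all _ fun x => hasDerivAt_pullbackIntegrand θ (hfd x))).2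
  refine hderiv.congr_of_eventuallyEq ?_
  filter_upwards [eventually_injective_add_smul hθL] with t ht
  exact setIntegral_image_add_smul volume hθd ht hΩ f
end
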